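/- arXiv:1709.10008 — 5 statements merged into one kernel-verified Lean document; each statement's English description precedes it below -/
import Mathlib

section
/- The must-analysis abstract transformer is locally consistent: for any abstract must state q̂ : M → Fin (k+1), any block b, and any concrete state q with q(b') ≤ q̂(b') for all b', the updated concrete state satisfies update(q,b)(b') ≤ update_Must(q̂,b)(b') for all b', where update_Must is defined identically to the concrete update. -/
/-- The LRU update function on cache states `q : M → Fin (k+1)` (ages truncated at `k`).
The must-analysis abstract transformer `update_Must` is defined identically. -/
def lruUpdate {M : Type*} [DecidableEq M] (k : ℕ) (q : M → Fin (k+1)) (b : M) : M → Fin (k+1) :=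
  fun b' => if b' = b then 0 else if q b ≤ q b' then q b' else ⟨min ((q b' : ℕ) + 1) k, by omega⟩

/-- Local consistency of the must-analysis abstract transformer: if `q ∈ γ_Must(q̂)`,
i.e. `q` is pointwise below the abstract must state `q̂`, then the concrete update of `q`
is pointwise below the abstract must update of `q̂`. -/
theorem mustUpdate_local_consistency {M : Type*} [DecidableEq M] (k : ℕ)
    (qhat q : M → Fin (k+1)) (b : M) (h : ∀ b', q b' ≤ qhat b') :
    ∀ b', lruUpdate k q b b' ≤ lruUpdate k qhat b b' := by
  intro b'
  have h1 := h b'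
  have h2 := h b
  have hx := (q b').isLt
  have hX := (qhat b').isLt
  simp only [Fin.le_def] at h1 h2
  simp only [lruUpdate]
  split_ifs <;> simp only [Fin.le_def, Fin.mk_le_mk, Fin.le_def] at * <;> omega
end

section
/- Local consistency of the Exists-Hit abstract transformer: let (q̂, q̂_Must) be an abstract EH state and b a block. If Q is a nonempty set of concrete cache states with Q ⊆ γ_Must(q̂_Must) and for every block b' there exists q ∈ Q with q(b') ≤ q̂(b'), then for every block b' there exists q' in update^C(Q,b) = {update(q,b) | q ∈ Q} with q'(b') ≤ q̂'(b'), where q̂' is the EH-updated bound: q̂'(b') = 0 if b' = b; q̂(b') if q̂_Must(b) ≤ q̂(b'); min(q̂(b')+1, k) otherwise. Moreover update^C(Q,b) ⊆ γ_Must(update_Must(q̂_Must, b)). -/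
/-- The Exists-Hit abstract transformer on the bound component:
`q̂'(b') = 0` if `b' = b`; `q̂(b')` if `q̂_Must(b) ≤ q̂(b')`; `min (q̂(b')+1) k` otherwise. -/
def ehUpdate {M : Type*} [DecidableEq M] (k : ℕ)
    (qh qMust : M → Fin (k+1)) (b : M) : M → Fin (k+1) :=
  fun b' => if b' = b then 0 else if qMust b ≤ qh b' then qh b'
            else ⟨min ((qh b' : ℕ) + 1) k, by omega⟩

/-- Local consistency of the Exists-Hit abstract transformer. -/
theorem ehUpdate_local_consistency {M : Type*} [DecidableEq M] (k : ℕ)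
    (qh qMust : M → Fin (k+1)) (b : M) (Q : Set (M → Fin (k+1)))
    (hne : Q.Nonempty)
    (hmust : Q ⊆ {q | ∀ b', q b' ≤ qMust b'})
    (hmin : ∀ b', ∃ q ∈ Q, q b' ≤ qh b') :
    (∀ b', ∃ q' ∈ (fun q => lruUpdate k q b) '' Q, q' b' ≤ ehUpdate k qh qMust b b') ∧
    (fun q => lruUpdate k q b) '' Q ⊆ {q | ∀ b', q b' ≤ lruUpdate k qMust b b'} := by
  constructor
  · intro b'
    obtain ⟨q, hqQ, hq⟩ := hmin b'
    refine ⟨lruUpdate k q b, ⟨q, hqQ, rfl⟩, ?_⟩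
    have hmb := hmust hqQ b
    have h1 : (q b' : ℕ) ≤ qh b' := hq
    have h2 : (q b : ℕ) ≤ qMust b := hmb
    have h3 : (qh b' : ℕ) ≤ k := Nat.lt_succ_iff.mp (qh b').isLt
    simp only [lruUpdate, ehUpdate, Fin.le_def, Fin.val_zero]
    split_ifs <;> simp only [Fin.le_def, Fin.val_mk, Fin.val_zero, not_le] at * <;> omega
  · rintro q' ⟨q, hqQ, rfl⟩ b'
    have h1 : (q b' : ℕ) ≤ qMust b' := hmust hqQ b'
    have h2 : (q b : ℕ) ≤ qMust b := hmust hqQ b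
    simp only [lruUpdate, Fin.le_def, Fin.val_zero]
    split_ifs <;> simp only [Fin.le_def, Fin.val_mk, Fin.val_zero, not_le] at * <;> omega
end

section
/- Join consistency of the Exists-Hit analysis: if Q1 ∈ γ_EH(q̂1, q̂_M1) and Q2 ∈ γ_EH(q̂2, q̂_M2), then Q1 ∪ Q2 ∈ γ_EH(λb. min(q̂1(b), q̂2(b)), λb. max(q̂_M1(b), q̂_M2(b))). -/
/-- The must concretization: `γ_Must(q̂_M) = {q | ∀ b, q(b) ≤ q̂_M(b)}`. -/
def gammaMust {M : Type*} {k : ℕ} (qM : M → Fin (k+1)) : Set (M → Fin (k+1)) :=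
  {q | ∀ b, q b ≤ qM b}

/-- The Exists-Hit concretization:
`γ_EH(q̂, q̂_M) = {Q ⊆ γ_Must(q̂_M) | ∀ b, ∃ q ∈ Q, q(b) ≤ q̂(b)}`. -/
def gammaEH {M : Type*} {k : ℕ} (qh qM : M → Fin (k+1)) :
    Set (Set (M → Fin (k+1))) :=
  {Q | Q ⊆ gammaMust qM ∧ ∀ b, ∃ q ∈ Q, q b ≤ qh b}

/-- Join consistency of the Exists-Hit analysis. -/
theorem ehJoin_consistency {M : Type*} {k : ℕ}
    (qh1 qM1 qh2 qM2 : M → Fin (k+1)) (Q1 Q2 : Set (M → Fin (k+1)))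
    (h1 : Q1 ∈ gammaEH qh1 qM1) (h2 : Q2 ∈ gammaEH qh2 qM2) :
    Q1 ∪ Q2 ∈ gammaEH (fun b => min (qh1 b) (qh2 b)) (fun b => max (qM1 b) (qM2 b)) := by
  obtain ⟨hs1, hh1⟩ := h1
  obtain ⟨hs2, hh2⟩ := h2
  constructor
  · rintro q (hq | hq) b
    · exact le_max_of_le_left (hs1 hq b)
    · exact le_max_of_le_right (hs2 hq b)
  · intro b
    rcases le_total (qh1 b) (qh2 b) with h | h
    · obtain ⟨q, hq, hle⟩ := hh1 b
      exact ⟨q, Or.inl hq, by simpa [min_eq_left h] using hle⟩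
    · obtain ⟨q, hq, hle⟩ := hh2 b
      exact ⟨q, Or.inr hq, by simpa [min_eq_right h] using hle⟩
end

section
/- Well-formedness of LRU states is preserved by update: if q is a well-formed cache state (ages of cached blocks are pairwise distinct and form a downward-closed set in {0,...,k-1}), then update(q,b) is also well-formed, for any block b. -/
/-- Well-formed LRU state: ages of cached blocks are pairwise distinct and form a
downward-closed set. -/
def WellFormed {M : Type*} (k : ℕ) (q : M → Fin (k+1)) : Prop :=
  (∀ b1 b2, (q b1 : ℕ) < k → (q b2 : ℕ) < k → q b1 = q b2 → b1 = b2) ∧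
  (∀ i j : ℕ, i < k → (∃ b, (q b : ℕ) = i) → j < i → ∃ b, (q b : ℕ) = j)

lemma lruUpdate_val {M : Type*} [DecidableEq M] (k : ℕ) (q : M → Fin (k+1)) (b b' : M) :
    ((lruUpdate k q b b' : Fin (k+1)) : ℕ) =
      if b' = b then 0 else if (q b : ℕ) ≤ (q b' : ℕ) then (q b' : ℕ) else (q b' : ℕ) + 1 := by
  have hb : (q b : ℕ) ≤ k := Nat.lt_succ_iff.mp (q b).isLt
  simp only [lruUpdate, Fin.le_def]
  split_ifs with h1 h2
  · rfl
  · rfl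
  · simp only [Fin.val_mk]; omega

/-- Well-formedness of LRU states is preserved by the update. -/
theorem lruUpdate_preserves_wellFormed {M : Type*} [DecidableEq M]
    (k : ℕ) (q : M → Fin (k+1)) (hq : WellFormed k q) (b : M) :
    WellFormed k (lruUpdate k q b) := by
  obtain ⟨hinj, hdc⟩ := hq
  have hk : ∀ b', (q b' : ℕ) ≤ k := fun b' => Nat.lt_succ_iff.mp (q b').isLt
  constructor
  · intro b1 b2 h1 h2 heq
    have H : ((lruUpdate k q b b1 : Fin (k+1)) : ℕ) = ((lruUpdate k q b b2 : Fin (k+1)) : ℕ) :=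
      congrArg Fin.val heq
    rw [lruUpdate_val] at H h1
    rw [lruUpdate_val] at H h2
    by_cases e1 : b1 = b <;> by_cases e2 : b2 = b
    · exact e1.trans e2.symm
    · -- b1 = b, b2 ≠ b
      rw [if_pos e1, if_neg e2] at H
      rw [if_neg e2] at h2
      split_ifs at H h2 with hc
      · -- q b2 = 0, and v ≤ q b2, so q b = q b2 = 0
        have h : q b2 = q b := Fin.ext (by omega)
        exact absurd (hinj b2 b (by omega) (by omega) h) e2
    · -- b2 = b, b1 ≠ b
      rw [if_pos e2, if_neg e1] at H
      rw [if_neg e1] at h1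
      split_ifs at H h1 with hc
      · have h : q b1 = q b := Fin.ext (by omega)
        exact absurd (hinj b1 b (by omega) (by omega) h) e1
    · rw [if_neg e1] at H h1
      rw [if_neg e2] at H h2
      split_ifs at H h1 h2 with hc1 hc2 hc2
      · exact hinj b1 b2 h1 h2 (Fin.ext (by omega))
      · -- q b1 >= v, q b2 < v, q b1 = q b2 + 1 <= v so q b1 = v
        have h : q b1 = q b := Fin.ext (by omega)
        exact absurd (hinj b1 b h1 (by omega) h) e1
      · have h : q b2 = q b := Fin.ext (by omega)
        exact absurd (hinj b2 b h2 (by omega) h) e2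
      · exact hinj b1 b2 (by omega) (by omega) (Fin.ext (by omega))
  · intro i j hi hex hji
    obtain ⟨b', hb'⟩ := hex
    rw [lruUpdate_val] at hb'
    by_cases hj0 : j = 0
    · exact ⟨b, by rw [lruUpdate_val]; simp [hj0]⟩
    have hbb : b' ≠ b := by
      intro h; rw [if_pos h] at hb'; omega
    rw [if_neg hbb] at hb'
    split_ifs at hb' with hc
    · -- q b' = i, v ≤ i
      by_cases hjv : (q b : ℕ) < j
      · obtain ⟨c, hcv⟩ := hdc i j hi ⟨b', hb'⟩ hji
        have hcb : c ≠ b := by intro h; subst h; omega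
        refine ⟨c, ?_⟩
        rw [lruUpdate_val, if_neg hcb, if_pos (by omega)]
        exact hcv
      · obtain ⟨c, hcv⟩ := hdc i (j-1) hi ⟨b', hb'⟩ (by omega)
        have hcb : c ≠ b := by intro h; subst h; omega
        refine ⟨c, ?_⟩
        rw [lruUpdate_val, if_neg hcb, if_neg (by omega)]
        omega
    · -- q b' + 1 = i, q b' < v
      obtain ⟨c, hcv⟩ := hdc (i-1) (j-1) (by omega) ⟨b', by omega⟩ (by omega)
      have hcb : c ≠ b := by intro h; subst h; omega
      refine ⟨c, ?_⟩
      rw [lruUpdate_val, if_neg hcb, if_neg (by omega)]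
      omega
end

section
/- For the focused cache model, if block a is accessed at least once in a sequence of accesses starting from any focused state, and afterwards fewer than k distinct other blocks are accessed, then the final focused state is not ε (i.e., a remains cached). Formally: for any list of accesses w = u ++ [a] ++ v with v containing no occurrence of a and fewer than k distinct blocks, the iterated focused update of any initial focused state along w is a set (not ε) of size at most the number of distinct blocks in v. -/
/-- The focused cache update for focus block `a`. -/
def focusUpdate {M : Type*} [DecidableEq M] (k : ℕ) (a : M)
    (Q : Option (Finset M)) (b : M) : Option (Finset M) :=
  if b = a then some ∅
  else match Q with
    | none => none
    | some s => if (insert b s).card < k then some (insert b s) else none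

/-- Iterated focused update along a list of accesses, processed left to right. -/
def runFocus {M : Type*} [DecidableEq M] (k : ℕ) (a : M)
    (Q : Option (Finset M)) : List M → Option (Finset M)
  | [] => Q
  | b :: rest => runFocus k a (focusUpdate k a Q b) rest

section
variable {M : Type*} [DecidableEq M] (k : ℕ) (a : M)

lemma runFocus_append (Q : Option (Finset M)) (l₁ l₂ : List M) :
    runFocus k a Q (l₁ ++ l₂) = runFocus k a (runFocus k a Q l₁) l₂ := by
  induction l₁ generalizing Q with
  | nil => rfl
  | cons b l ih => exact ih _

lemma focusUpdate_self (Q : Option (Finset M)) : focusUpdate k a Q a = some ∅ :=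
  if_pos rfl

lemma focusUpdate_some_of_ne {s : Finset M} {b : M} (hb : b ≠ a)
    (hs : (insert b s).card < k) : focusUpdate k a (some s) b = some (insert b s) := by
  simp only [focusUpdate, if_neg hb, if_pos hs]

lemma runFocus_some_of_notMem {s : Finset M} {v : List M} (hv : a ∉ v)
    (hs : (s ∪ v.toFinset).card < k) : runFocus k a (some s) v = some (s ∪ v.toFinset) := by
  induction v generalizing s with
  | nil => simp [runFocus]
  | cons b l ih =>
    have hb : b ≠ a := fun h => hv (h ▸ List.mem_cons_self)
    have hunion : s ∪ (b :: l).toFinset = insert b s ∪ l.toFinset := by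
      rw [List.toFinset_cons, Finset.union_insert, Finset.insert_union]
    have hins : (insert b s).card < k :=
      (Finset.card_le_card (hunion ▸ Finset.subset_union_left)).trans_lt hs
    rw [runFocus, focusUpdate_some_of_ne k a hb hins, hunion]
    exact ih (fun h => hv (List.mem_cons_of_mem b h)) (hunion ▸ hs)

end

/-- If `a` is accessed and afterwards fewer than `k` distinct other blocks are accessed,
then the focused state stays a set (i.e. `a` remains cached) of size at most the number
of distinct blocks accessed after `a`. -/
theorem runFocus_stays_cached {M : Type*} [DecidableEq M]
    (k : ℕ) (a : M) (Q0 : Option (Finset M)) (u v : List M)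
    (hv : a ∉ v) (hcard : v.toFinset.card < k) :
    ∃ s : Finset M, runFocus k a Q0 (u ++ [a] ++ v) = some s ∧
      s.card ≤ v.toFinset.card := by
  have hrun : runFocus k a (some ∅) v = some v.toFinset := by
    simpa using runFocus_some_of_notMem k a hv (s := ∅) (by simpa using hcard)
  refine ⟨v.toFinset, ?_, le_rfl⟩
  rw [runFocus_append, runFocus_append, runFocus, runFocus, focusUpdate_self, hrun]
end
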